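/- arXiv:1607.07035 — 2 statements merged into one kernel-verified Lean document; each statement's English description precedes it below -/
import Mathlib

section
/- Let k be a field, A a commutative k-algebra, and n ≥ 1. If χ is an invertible n × n matrix over A ⊗[k] A satisfying the cocycle condition ∂₂(χ) = ∂₁(χ) · ∂₃(χ) (the ring homomorphisms ∂ᵢ being applied entrywise and the product being matrix multiplication), then there exists an invertible n × n matrix α over A such that χ = δ₁(α) · δ₂(α)⁻¹. (This expresses that the Amitsur cohomology set H¹(A/k, GLₙ) is trivial for every algebra A over a field k.) -/
open TensorProduct

/-- `δ₁ : A → A ⊗[k] A`, `a ↦ 1 ⊗ a`. -/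
noncomputable def amitsurD1 (k A : Type*) [CommRing k] [CommRing A] [Algebra k A] :
    A →ₐ[k] A ⊗[k] A :=
  Algebra.TensorProduct.includeRight

/-- `δ₂ : A → A ⊗[k] A`, `a ↦ a ⊗ 1`. -/
noncomputable def amitsurD2 (k A : Type*) [CommRing k] [CommRing A] [Algebra k A] :
    A →ₐ[k] A ⊗[k] A :=
  Algebra.TensorProduct.includeLeft

/-- `∂₁ : A ⊗[k] A → A ⊗[k] A ⊗[k] A`, `a ⊗ b ↦ 1 ⊗ a ⊗ b`. -/
noncomputable def amitsurP1 (k A : Type*) [CommRing k] [CommRing A] [Algebra k A] :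
    A ⊗[k] A →ₐ[k] A ⊗[k] (A ⊗[k] A) :=
  Algebra.TensorProduct.includeRight

/-- `∂₂ : A ⊗[k] A → A ⊗[k] A ⊗[k] A`, `a ⊗ b ↦ a ⊗ 1 ⊗ b`. -/
noncomputable def amitsurP2 (k A : Type*) [CommRing k] [CommRing A] [Algebra k A] :
    A ⊗[k] A →ₐ[k] A ⊗[k] (A ⊗[k] A) :=
  Algebra.TensorProduct.map (AlgHom.id k A) Algebra.TensorProduct.includeRight

/-- `∂₃ : A ⊗[k] A → A ⊗[k] A ⊗[k] A`, `a ⊗ b ↦ a ⊗ b ⊗ 1`. -/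
noncomputable def amitsurP3 (k A : Type*) [CommRing k] [CommRing A] [Algebra k A] :
    A ⊗[k] A →ₐ[k] A ⊗[k] (A ⊗[k] A) :=
  Algebra.TensorProduct.map (AlgHom.id k A) Algebra.TensorProduct.includeLeft

/-!
Let `M ⊆ Aⁿ` be the `k`-subspace of vectors `v` with `χ · δ₂(v) = δ₁(v)`. By descent along
`k → A`, `a ⊗ v ↦ a • v` is an isomorphism `A ⊗[k] M ≃ Aⁿ` of `A`-modules, so a `k`-basis of `M`
has `n` elements and its members are the columns of an invertible `α` with `χ · δ₂(α) = δ₁(α)`.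

Injectivity and surjectivity both go through the `A`-module `W ⊆ (A ⊗[k] A)ⁿ` of vectors `w` with
`∂₂(w) = ∂₁(χ) · ∂₃(w)`. The codegeneracy `a ⊗ b ⊗ c ↦ ab ⊗ c` turns this equation into
`w = χ · δ₂(μ w)`, with `μ` the multiplication of `A`, so `μ` is injective on `W`. Contracting the
first factor against linear forms `A → k` maps `W` into `M`; since `A` is free over the field `k`,
this shows that `W` is the image of `A ⊗[k] M`, which gives injectivity of `A ⊗[k] M → Aⁿ`. For
surjectivity, the cocycle condition puts `χ · δ₂(v)` in `W` and forces `μ(χ) = 1`, so `v` is the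
image of `χ · δ₂(v)` under `μ`.
-/

open Matrix
open Algebra.TensorProduct (lmul')

section Cosimplicial

variable (k A : Type*) [CommRing k] [CommRing A] [Algebra k A]

noncomputable def amitsurCodegeneracy : A ⊗[k] (A ⊗[k] A) →ₐ[k] A ⊗[k] A :=
  Algebra.TensorProduct.lift (amitsurD2 k A) (AlgHom.id k _) fun _ _ => Commute.all _ _

variable {k A}

@[simp] lemma amitsurCodegeneracy_tmul (a : A) (t : A ⊗[k] A) :
    amitsurCodegeneracy k A (a ⊗ₜ t) = (a ⊗ₜ 1) * t := by
  simp [amitsurCodegeneracy, amitsurD2]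

lemma amitsurCodegeneracy_comp_amitsurP1 :
    (amitsurCodegeneracy k A).comp (amitsurP1 k A) = AlgHom.id k _ := by
  ext <;> simp [amitsurP1]

lemma amitsurCodegeneracy_comp_amitsurP2 :
    (amitsurCodegeneracy k A).comp (amitsurP2 k A) = AlgHom.id k _ := by
  ext <;> simp [amitsurP2]

lemma amitsurCodegeneracy_comp_amitsurP3 :
    (amitsurCodegeneracy k A).comp (amitsurP3 k A) = (amitsurD2 k A).comp (lmul' k) := by
  ext <;> simp [amitsurP3, amitsurD2]

lemma amitsurP2_comp_amitsurD1 :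
    (amitsurP2 k A).comp (amitsurD1 k A) = (amitsurP1 k A).comp (amitsurD1 k A) := by
  ext; simp [amitsurP1, amitsurP2, amitsurD1]

lemma amitsurP1_comp_amitsurD2 :
    (amitsurP1 k A).comp (amitsurD2 k A) = (amitsurP3 k A).comp (amitsurD1 k A) := by
  ext; simp [amitsurP1, amitsurP3, amitsurD1, amitsurD2]

lemma amitsurP2_comp_amitsurD2 :
    (amitsurP2 k A).comp (amitsurD2 k A) = (amitsurP3 k A).comp (amitsurD2 k A) := by
  ext; simp [amitsurP2, amitsurP3, amitsurD2]

lemma amitsurP2_smul (a : A) (t : A ⊗[k] A) : amitsurP2 k A (a • t) = a • amitsurP2 k A t := by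
  induction t using TensorProduct.induction_on with
  | zero => simp
  | tmul x y => simp [amitsurP2, smul_tmul']
  | add x y hx hy => simp_all

lemma amitsurP3_smul (a : A) (t : A ⊗[k] A) : amitsurP3 k A (a • t) = a • amitsurP3 k A t := by
  induction t using TensorProduct.induction_on with
  | zero => simp
  | tmul x y => simp [amitsurP3, smul_tmul']
  | add x y hx hy => simp_all

end Cosimplicial

section Contraction

variable {k A : Type*} [CommRing k] [CommRing A] [Algebra k A] (f : A →ₗ[k] k)

lemma lid_rTensor_amitsurP1_mul (s : A ⊗[k] A) (u : A ⊗[k] (A ⊗[k] A)) :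
    TensorProduct.lid k _ (f.rTensor _ (amitsurP1 k A s * u)) =
      s * TensorProduct.lid k _ (f.rTensor _ u) := by
  induction u using TensorProduct.induction_on with
  | zero => simp
  | tmul x y => simp [amitsurP1, Algebra.TensorProduct.tmul_mul_tmul]
  | add x y hx hy => simp_all [mul_add]

lemma lid_rTensor_amitsurP2 (t : A ⊗[k] A) :
    TensorProduct.lid k _ (f.rTensor _ (amitsurP2 k A t)) =
      amitsurD1 k A (TensorProduct.lid k A (f.rTensor A t)) := by
  induction t using TensorProduct.induction_on with
  | zero => simp
  | tmul x y => simp [amitsurP2, amitsurD1]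
  | add x y hx hy => simp_all

lemma lid_rTensor_amitsurP3 (t : A ⊗[k] A) :
    TensorProduct.lid k _ (f.rTensor _ (amitsurP3 k A t)) =
      amitsurD2 k A (TensorProduct.lid k A (f.rTensor A t)) := by
  induction t using TensorProduct.induction_on with
  | zero => simp
  | tmul x y => simp [amitsurP3, amitsurD2, smul_tmul']
  | add x y hx hy => simp_all

end Contraction

section TensorFree

variable {k M V : Type*} [CommRing k] [AddCommGroup M] [Module k M] [AddCommGroup V] [Module k V]

lemma mem_range_lTensor_subtype_of_forall_lid_rTensor_mem [Module.Free k M] (N : Submodule k V)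
    {y : M ⊗[k] V} (hy : ∀ f : M →ₗ[k] k, TensorProduct.lid k V (f.rTensor V y) ∈ N) :
    y ∈ LinearMap.range (N.subtype.lTensor M) := by
  classical
  let b := Module.Free.chooseBasis k M
  rw [← (equivFinsuppOfBasisLeft b).symm_apply_apply y, equivFinsuppOfBasisLeft_symm_apply]
  refine Submodule.finsuppSum_mem _ _ _ _ fun t _ => ⟨b t ⊗ₜ ⟨_, hy (b.coord t)⟩, ?_⟩
  simp [equivFinsuppOfBasisLeft_apply]

lemma lid_rTensor_piRight_apply {ι : Type*} [Fintype ι] [DecidableEq ι] (f : M →ₗ[k] k)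
    (y : M ⊗[k] (ι → V)) (i : ι) :
    TensorProduct.lid k V (f.rTensor V (piRight k k M (fun _ => V) y i)) =
      TensorProduct.lid k (ι → V) (f.rTensor _ y) i := by
  induction y using TensorProduct.induction_on with
  | zero => simp
  | tmul x v => simp
  | add x y hx hy => simp_all

end TensorFree

lemma Function.comp_add_eq_add_comp {ι R S F : Type*} [AddZeroClass R] [AddZeroClass S]
    [FunLike F R S] [AddMonoidHomClass F R S] (g : F) (v w : ι → R) :
    g ∘ (v + w) = g ∘ v + g ∘ w :=
  funext fun _ => map_add g _ _

lemma AlgHom.comp_mulVec {ι R S T : Type*} [Fintype ι] [CommSemiring R] [Semiring S] [Semiring T]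
    [Algebra R S] [Algebra R T] (g : S →ₐ[R] T) (M : Matrix ι ι S) (v : ι → S) :
    g ∘ (M *ᵥ v) = M.map g *ᵥ (g ∘ v) :=
  funext (RingHom.map_mulVec g.toRingHom M v)

section Descent

variable {k A : Type*} [CommRing k] [CommRing A] [Algebra k A] {ι : Type*} [Fintype ι]
  (X : Matrix ι ι (A ⊗[k] A))

def IsAmitsurCocycle : Prop :=
  X.map (amitsurP2 k A) = X.map (amitsurP1 k A) * X.map (amitsurP3 k A)

def amitsurDescentSubmodule : Submodule k (ι → A) where
  carrier := {v | X *ᵥ (amitsurD2 k A ∘ v) = amitsurD1 k A ∘ v}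
  add_mem' {v w} hv hw := by
    simp only [Set.mem_ofPred_eq, Function.comp_add_eq_add_comp, mulVec_add] at *
    rw [hv, hw]
  zero_mem' := by simp
  smul_mem' c v hv := by
    have hcomp : ∀ g : A →ₐ[k] A ⊗[k] A, g ∘ (c • v) = c • (g ∘ v) :=
      fun g => funext fun _ => map_smul g _ _
    simp only [Set.mem_ofPred_eq, hcomp, mulVec_smul] at *
    rw [hv]

/-- `A` acts on `A ⊗[k] A` through the left factor. -/
def amitsurCompatibleSubmodule : Submodule A (ι → A ⊗[k] A) where
  carrier := {w | amitsurP2 k A ∘ w = X.map (amitsurP1 k A) *ᵥ (amitsurP3 k A ∘ w)}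
  add_mem' {v w} hv hw := by
    simp only [Set.mem_ofPred_eq, Function.comp_add_eq_add_comp, mulVec_add] at *
    rw [hv, hw]
  zero_mem' := by simp
  smul_mem' a w hw := by
    have h2 : amitsurP2 k A ∘ (a • w) = a • (amitsurP2 k A ∘ w) :=
      funext fun _ => amitsurP2_smul _ _
    have h3 : amitsurP3 k A ∘ (a • w) = a • (amitsurP3 k A ∘ w) :=
      funext fun _ => amitsurP3_smul _ _
    simp only [Set.mem_ofPred_eq, h2, h3, mulVec_smul] at *
    rw [hw]

variable {X}

lemma IsAmitsurCocycle.mulVec_amitsurD2_mem_amitsurCompatibleSubmodule (hX : IsAmitsurCocycle X)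
    (v : ι → A) : X *ᵥ (amitsurD2 k A ∘ v) ∈ amitsurCompatibleSubmodule X :=
  calc amitsurP2 k A ∘ (X *ᵥ (amitsurD2 k A ∘ v))
      = X.map (amitsurP2 k A) *ᵥ (amitsurP2 k A ∘ amitsurD2 k A ∘ v) := AlgHom.comp_mulVec _ _ _
    _ = (X.map (amitsurP1 k A) * X.map (amitsurP3 k A)) *ᵥ
          (amitsurP3 k A ∘ amitsurD2 k A ∘ v) := by
      rw [← hX]
      exact congrArg (_ *ᵥ ·) (funext fun i => DFunLike.congr_fun amitsurP2_comp_amitsurD2 (v i))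
    _ = X.map (amitsurP1 k A) *ᵥ (amitsurP3 k A ∘ (X *ᵥ (amitsurD2 k A ∘ v))) := by
      rw [← mulVec_mulVec, AlgHom.comp_mulVec]

lemma amitsurD1_comp_mem_amitsurCompatibleSubmodule {v : ι → A}
    (hv : v ∈ amitsurDescentSubmodule X) : amitsurD1 k A ∘ v ∈ amitsurCompatibleSubmodule X :=
  calc amitsurP2 k A ∘ (amitsurD1 k A ∘ v)
      = amitsurP1 k A ∘ (amitsurD1 k A ∘ v) :=
        funext fun i => DFunLike.congr_fun amitsurP2_comp_amitsurD1 (v i)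
    _ = X.map (amitsurP1 k A) *ᵥ (amitsurP1 k A ∘ amitsurD2 k A ∘ v) := by
      rw [← hv, AlgHom.comp_mulVec]
    _ = X.map (amitsurP1 k A) *ᵥ (amitsurP3 k A ∘ (amitsurD1 k A ∘ v)) :=
      congrArg (_ *ᵥ ·) (funext fun i => DFunLike.congr_fun amitsurP1_comp_amitsurD2 (v i))

lemma mulVec_amitsurD2_lmul'_of_mem_amitsurCompatibleSubmodule {w : ι → A ⊗[k] A}
    (hw : w ∈ amitsurCompatibleSubmodule X) : X *ᵥ (amitsurD2 k A ∘ lmul' k ∘ w) = w :=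
  calc X *ᵥ (amitsurD2 k A ∘ lmul' k ∘ w)
        = X.map ((amitsurCodegeneracy k A).comp (amitsurP1 k A)) *ᵥ
          ((amitsurCodegeneracy k A).comp (amitsurP3 k A) ∘ w) := by
        rw [amitsurCodegeneracy_comp_amitsurP1, amitsurCodegeneracy_comp_amitsurP3]
        simp [Function.comp_assoc]
    _ = amitsurCodegeneracy k A ∘ (X.map (amitsurP1 k A) *ᵥ (amitsurP3 k A ∘ w)) := by
        rw [AlgHom.comp_mulVec, Matrix.map_map]
        rfl
    _ = amitsurCodegeneracy k A ∘ (amitsurP2 k A ∘ w) := by rw [← hw]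
    _ = w := funext fun i => DFunLike.congr_fun amitsurCodegeneracy_comp_amitsurP2 (w i)

lemma lid_rTensor_comp_mem_amitsurDescentSubmodule {w : ι → A ⊗[k] A}
    (hw : w ∈ amitsurCompatibleSubmodule X) (f : A →ₗ[k] k) :
    (fun i => TensorProduct.lid k A (f.rTensor A (w i))) ∈ amitsurDescentSubmodule X := by
  have hmulVec : ∀ u : ι → A ⊗[k] (A ⊗[k] A),
      (fun i => TensorProduct.lid k _ (f.rTensor _ ((X.map (amitsurP1 k A) *ᵥ u) i))) =
        X *ᵥ fun i => TensorProduct.lid k _ (f.rTensor _ (u i)) := by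
    intro u
    funext i
    simp [mulVec, dotProduct, lid_rTensor_amitsurP1_mul]
  have h := congrArg (fun u i => TensorProduct.lid k _ (f.rTensor _ (u i))) hw
  simp only [Function.comp_apply, hmulVec, lid_rTensor_amitsurP2, lid_rTensor_amitsurP3] at h
  exact h.symm

lemma IsAmitsurCocycle.map_lmul'_eq_one [DecidableEq ι] (hX : IsAmitsurCocycle X)
    (hunit : IsUnit X) : X.map (lmul' k) = 1 := by
  have h := congrArg (amitsurCodegeneracy k A).mapMatrix hX
  simp only [AlgHom.mapMatrix_apply, map_mul, Matrix.map_map, ← AlgHom.coe_comp,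
    amitsurCodegeneracy_comp_amitsurP1, amitsurCodegeneracy_comp_amitsurP2,
    amitsurCodegeneracy_comp_amitsurP3, AlgHom.coe_id, Matrix.map_id] at h
  have hD2 : (X.map (lmul' k)).map (amitsurD2 k A) = 1 := by
    rw [Matrix.map_map, ← AlgHom.coe_comp]
    exact hunit.mul_left_cancel (h.symm.trans (mul_one X).symm)
  calc X.map (lmul' k)
      = ((X.map (lmul' k)).map (amitsurD2 k A)).map (lmul' k) := by
        rw [Matrix.map_map, ← AlgHom.coe_comp, amitsurD2,
          Algebra.TensorProduct.lmul'_comp_includeLeft]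
        simp
    _ = 1 := by rw [hD2]; simp

lemma mul_map_amitsurD2_eq_map_amitsurD1 {α : Matrix ι ι A}
    (hα : ∀ j, (fun i => α i j) ∈ amitsurDescentSubmodule X) :
    X * α.map (amitsurD2 k A) = α.map (amitsurD1 k A) := by
  ext i j
  simpa [mulVec, dotProduct, Matrix.mul_apply] using congrFun (hα j) i

end Descent

section DescentField

variable {k A : Type*} [Field k] [CommRing A] [Algebra k A] {ι : Type*} [Fintype ι]
  [DecidableEq ι] {X : Matrix ι ι (A ⊗[k] A)}

variable (X) in
noncomputable def amitsurDescentInclusion :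
    A ⊗[k] amitsurDescentSubmodule X →ₗ[k] (ι → A ⊗[k] A) :=
  (piRight k k A fun _ : ι => A).toLinearMap ∘ₗ (amitsurDescentSubmodule X).subtype.lTensor A

lemma amitsurDescentInclusion_tmul (a : A) (v : amitsurDescentSubmodule X) :
    amitsurDescentInclusion X (a ⊗ₜ v) = a • (amitsurD1 k A ∘ v) := by
  funext i
  simp [amitsurDescentInclusion, amitsurD1, smul_tmul']

lemma amitsurDescentInclusion_injective : Function.Injective (amitsurDescentInclusion X) :=
  (piRight k k A fun _ : ι => A).injective.comp
    (Module.Flat.lTensor_preserves_injective_linearMap _ (Submodule.injective_subtype _))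

lemma amitsurDescentInclusion_mem_amitsurCompatibleSubmodule
    (x : A ⊗[k] amitsurDescentSubmodule X) :
    amitsurDescentInclusion X x ∈ amitsurCompatibleSubmodule X := by
  induction x using TensorProduct.induction_on with
  | zero => simp
  | tmul a v =>
    rw [amitsurDescentInclusion_tmul]
    exact Submodule.smul_mem _ a (amitsurD1_comp_mem_amitsurCompatibleSubmodule v.2)
  | add x y hx hy => rw [map_add]; exact add_mem hx hy

lemma mem_range_amitsurDescentInclusion {w : ι → A ⊗[k] A}
    (hw : w ∈ amitsurCompatibleSubmodule X) : w ∈ LinearMap.range (amitsurDescentInclusion X) := by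
  obtain ⟨y, rfl⟩ := (piRight k k A fun _ : ι => A).surjective w
  obtain ⟨x, rfl⟩ := mem_range_lTensor_subtype_of_forall_lid_rTensor_mem
    (amitsurDescentSubmodule X) (y := y) fun f => by
      simpa only [lid_rTensor_piRight_apply] using
        lid_rTensor_comp_mem_amitsurDescentSubmodule hw f
  exact ⟨x, rfl⟩

lemma lmul'_comp_amitsurDescentInclusion (x : A ⊗[k] amitsurDescentSubmodule X) :
    lmul' k ∘ amitsurDescentInclusion X x =
      (amitsurDescentSubmodule X).subtype.liftBaseChange A x := by
  induction x using TensorProduct.induction_on with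
  | zero => funext; simp
  | tmul a v => funext; simp [amitsurDescentInclusion_tmul, amitsurD1, smul_tmul']
  | add x y hx hy => simp only [map_add, Function.comp_add_eq_add_comp, hx, hy]

lemma IsAmitsurCocycle.liftBaseChange_amitsurDescentSubmodule_bijective
    (hX : IsAmitsurCocycle X) (hunit : IsUnit X) :
    Function.Bijective ((amitsurDescentSubmodule X).subtype.liftBaseChange A) := by
  refine ⟨(injective_iff_map_eq_zero _).2 fun x hx => amitsurDescentInclusion_injective ?_,
    fun v => ?_⟩
  · rw [map_zero, ← mulVec_amitsurD2_lmul'_of_mem_amitsurCompatibleSubmodule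
      (amitsurDescentInclusion_mem_amitsurCompatibleSubmodule x),
      lmul'_comp_amitsurDescentInclusion, hx]
    simp
  · obtain ⟨x, hx⟩ := mem_range_amitsurDescentInclusion
      (hX.mulVec_amitsurD2_mem_amitsurCompatibleSubmodule v)
    refine ⟨x, ?_⟩
    rw [← lmul'_comp_amitsurDescentInclusion, hx, AlgHom.comp_mulVec, hX.map_lmul'_eq_one hunit,
      one_mulVec]
    funext i
    simp [amitsurD2]

lemma IsAmitsurCocycle.exists_isUnit_mul_map_amitsurD2_eq_map_amitsurD1 [Nontrivial A]
    (hX : IsAmitsurCocycle X) (hunit : IsUnit X) :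
    ∃ α : Matrix ι ι A, IsUnit α ∧ X * α.map (amitsurD2 k A) = α.map (amitsurD1 k A) := by
  let e := LinearEquiv.ofBijective _ (hX.liftBaseChange_amitsurDescentSubmodule_bijective hunit)
  let b := ((Module.Free.chooseBasis k (amitsurDescentSubmodule X)).baseChange A).map e
  let c := b.reindex (b.indexEquiv (Pi.basisFun A ι))
  have hc : ∀ j, c j ∈ amitsurDescentSubmodule X := fun j => by
    simp [c, b, e, Module.Basis.baseChange_apply]
  refine ⟨(Pi.basisFun A ι).toMatrix c, ?_, mul_map_amitsurD2_eq_map_amitsurD1 fun j => ?_⟩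
  · let := (Pi.basisFun A ι).invertibleToMatrix c
    exact isUnit_of_invertible _
  · simpa [Module.Basis.toMatrix_apply] using hc j

end DescentField

theorem amitsur_h1_GLn_trivial_general (k A : Type*) [Field k] [CommRing A] [Algebra k A]
    (n : ℕ)
    (χ : (Matrix (Fin n) (Fin n) (A ⊗[k] A))ˣ)
    (hcoc : χ.val.map (amitsurP2 k A) =
      χ.val.map (amitsurP1 k A) * χ.val.map (amitsurP3 k A)) :
    ∃ α : (Matrix (Fin n) (Fin n) A)ˣ,
      χ = Units.map ((amitsurD1 k A).toRingHom.mapMatrix.toMonoidHom) α *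
          (Units.map ((amitsurD2 k A).toRingHom.mapMatrix.toMonoidHom) α)⁻¹ := by
  rcases subsingleton_or_nontrivial A with hA | hA
  · exact ⟨1, Subsingleton.elim _ _⟩
  obtain ⟨α, hα, hmul⟩ :=
    IsAmitsurCocycle.exists_isUnit_mul_map_amitsurD2_eq_map_amitsurD1 hcoc χ.isUnit
  refine ⟨hα.unit, ?_⟩
  rw [eq_mul_inv_iff_mul_eq]
  ext1
  simpa using hmul

/-- `H¹(A/k, GLₙ)` is trivial for every algebra `A` over a field `k`:
every matrix 1-cocycle `χ ∈ GLₙ(A ⊗[k] A)` is of the form `δ₁(α)·δ₂(α)⁻¹`. -/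
theorem amitsur_h1_GLn_trivial (k A : Type*) [Field k] [CommRing A] [Algebra k A]
    (n : ℕ) (hn : 1 ≤ n)
    (χ : (Matrix (Fin n) (Fin n) (A ⊗[k] A))ˣ)
    (hcoc : χ.val.map (amitsurP2 k A) =
      χ.val.map (amitsurP1 k A) * χ.val.map (amitsurP3 k A)) :
    ∃ α : (Matrix (Fin n) (Fin n) A)ˣ,
      χ = Units.map ((amitsurD1 k A).toRingHom.mapMatrix.toMonoidHom) α *
          (Units.map ((amitsurD2 k A).toRingHom.mapMatrix.toMonoidHom) α)⁻¹ :=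
  amitsur_h1_GLn_trivial_general k A n χ hcoc
end

section
/- Let k be a σ-field and A a nonzero k-σ-algebra. Let α, α' ∈ Aˣ be units and a, b, a', b' ∈ k with α² = algebraMap k A (a), σ_A(α) = algebraMap k A (b) · α, α'² = algebraMap k A (a'), and σ_A(α') = algebraMap k A (b') · α'. Then the following are equivalent: (i) there exists a unit g ∈ Aˣ with g² = 1, σ_A(g) = g, and α'⁻¹ ⊗ α' = (1 ⊗ g) · (α⁻¹ ⊗ α) · (g⁻¹ ⊗ 1) in A ⊗[k] A; (ii) there exists a nonzero λ ∈ k with a' = λ² · a and λ · b' = σ_k(λ) · b. (This is the criterion for when two elements α, α' define cohomologous 1-cocycles for the σ-algebraic subgroup G of 𝔾ₘ given by G(R) = {g ∈ Rˣ | g² = 1, σ(g) = g}, underlying the classification of G-torsors X_{a,b} up to isomorphism.) -/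
/-!
Conjugating by `g` turns the cocycle `α⁻¹ ⊗ α` into `(gα)⁻¹ ⊗ gα`, and for units
`u⁻¹ ⊗ u = v⁻¹ ⊗ v` holds exactly when `u v⁻¹ ⊗ 1 = 1 ⊗ u v⁻¹`, i.e. when `u v⁻¹ ∈ k`
(apply `f ⊗ id` for a functional `f` with `f 1 = 1`). So (i) says `α' = λ g α` with `λ ∈ k`
and `g ∈ G(A)`; squaring and applying `σ` gives (ii). Conversely `g := α' (λα)⁻¹` lies in
`G(A)` because `λα` and `α'` have the same square `a'` and the same `σ`-multiplier `b'`.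
-/

open TensorProduct

theorem eq_algebraMap_of_tmul_one_eq_one_tmul {k A : Type*} [CommSemiring k] [Semiring A]
    [Algebra k A] {f : Module.Dual k A} (hf : f 1 = 1) {x : A}
    (h : x ⊗ₜ[k] (1 : A) = 1 ⊗ₜ x) : x = algebraMap k A (f x) := by
  have := congrArg (fun t ↦ TensorProduct.lid k A (f.rTensor A t)) h
  simp only [LinearMap.rTensor_tmul, TensorProduct.lid_tmul, hf, one_smul] at this
  rw [Algebra.algebraMap_eq_smul_one, this]

theorem exists_algebraMap_eq_of_tmul_one_eq_one_tmul {k A : Type*} [Field k] [Ring A]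
    [Algebra k A] [Nontrivial A] {x : A} (h : x ⊗ₜ[k] (1 : A) = 1 ⊗ₜ x) :
    ∃ c : k, x = algebraMap k A c :=
  have ⟨_, hf⟩ := Module.Projective.exists_dual_eq_one k (one_ne_zero (α := A))
  ⟨_, eq_algebraMap_of_tmul_one_eq_one_tmul hf h⟩

theorem inv_tmul_self_eq_inv_tmul_self_iff {k A : Type*} [Field k] [CommRing A]
    [Algebra k A] [Nontrivial A] (u v : Aˣ) :
    ((u⁻¹ : Aˣ) : A) ⊗ₜ[k] (u : A) = ((v⁻¹ : Aˣ) : A) ⊗ₜ[k] (v : A) ↔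
      ∃ c : k, (u : A) = algebraMap k A c * v := by
  constructor
  · intro h
    have h' := congrArg (· * ((u : A) ⊗ₜ[k] ((v⁻¹ : Aˣ) : A))) h
    simp only [Algebra.TensorProduct.tmul_mul_tmul, Units.inv_mul, Units.mul_inv,
      mul_comm ((v⁻¹ : Aˣ) : A)] at h'
    obtain ⟨c, hc⟩ := exists_algebraMap_eq_of_tmul_one_eq_one_tmul (k := k) h'.symm
    refine ⟨c, ?_⟩
    rw [← hc, mul_assoc, Units.inv_mul, mul_one]
  · rintro ⟨c, hc⟩
    have hinv : algebraMap k A c * ((u⁻¹ : Aˣ) : A) = ((v⁻¹ : Aˣ) : A) := by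
      rw [Units.mul_inv_eq_iff_eq_mul, hc, mul_left_comm, Units.inv_mul, mul_one]
    rw [hc, ← Algebra.smul_def, TensorProduct.tmul_smul, TensorProduct.smul_tmul',
      Algebra.smul_def, hinv]

theorem one_tmul_mul_inv_tmul_mul_inv_tmul_one {k A : Type*} [CommSemiring k] [CommSemiring A]
    [Algebra k A] (g u : Aˣ) :
    ((1 : A) ⊗ₜ[k] (g : A)) * (((u⁻¹ : Aˣ) : A) ⊗ₜ[k] (u : A)) * (((g⁻¹ : Aˣ) : A) ⊗ₜ[k] (1 : A)) =
      (((g * u)⁻¹ : Aˣ) : A) ⊗ₜ[k] ((g * u : Aˣ) : A) := by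
  simp only [Algebra.TensorProduct.tmul_mul_tmul, one_mul, mul_one, mul_inv_rev, Units.val_mul,
    mul_comm (g : A)]

theorem eq_sq_mul_and_mul_eq_of_eq_algebraMap_mul {k A : Type*} [Field k] [CommRing A]
    [Algebra k A] [Nontrivial A] {σk : k →+* k} {σA : A →+* A}
    (hσ : ∀ c : k, σA (algebraMap k A c) = algebraMap k A (σk c))
    {α α' : Aˣ} {a b a' b' : k}
    (h1 : (α : A) ^ 2 = algebraMap k A a) (h2 : σA α = algebraMap k A b * α)
    (h3 : (α' : A) ^ 2 = algebraMap k A a') (h4 : σA α' = algebraMap k A b' * α')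
    {g : Aˣ} (hg2 : (g : A) ^ 2 = 1) (hgσ : σA g = g) {l : k}
    (h : (α' : A) = algebraMap k A l * (g * α)) :
    l ≠ 0 ∧ a' = l ^ 2 * a ∧ l * b' = σk l * b := by
  refine ⟨?_, ?_, ?_⟩
  · rintro rfl
    exact α'.ne_zero (by rw [h, map_zero, zero_mul])
  · apply (algebraMap k A).injective
    rw [map_mul, map_pow, ← h1, ← h3, h]
    linear_combination (algebraMap k A l) ^ 2 * (α : A) ^ 2 * hg2
  · apply (algebraMap k A).injective
    rw [h, map_mul, map_mul, hσ, hgσ, h2] at h4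
    rw [map_mul, map_mul]
    apply (g * α).isUnit.mul_right_cancel
    push_cast
    linear_combination -h4

theorem exists_eq_algebraMap_mul_of_eq_sq_mul {k A : Type*} [Field k] [CommRing A]
    [Algebra k A] {σk : k →+* k} {σA : A →+* A}
    (hσ : ∀ c : k, σA (algebraMap k A c) = algebraMap k A (σk c))
    {α α' : Aˣ} {a b a' b' : k}
    (h1 : (α : A) ^ 2 = algebraMap k A a) (h2 : σA α = algebraMap k A b * α)
    (h3 : (α' : A) ^ 2 = algebraMap k A a') (h4 : σA α' = algebraMap k A b' * α')
    {l : k} (hl : l ≠ 0) (ha : a' = l ^ 2 * a) (hb : l * b' = σk l * b) :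
    ∃ g : Aˣ, (g : A) ^ 2 = 1 ∧ σA g = g ∧ (α' : A) = algebraMap k A l * (g * α) := by
  let β : Aˣ := Units.map (algebraMap k A : k →* A) (Units.mk0 l hl) * α
  have hβ : (β : A) = algebraMap k A l * α := rfl
  have hσβ : σA β = algebraMap k A b' * β := by
    rw [hβ, map_mul, hσ, h2, ← mul_assoc, ← map_mul, ← hb, map_mul]
    ring
  obtain ⟨g, hgβ⟩ : ∃ g : Aˣ, (g : A) * β = α' := ⟨α' * β⁻¹, by simp⟩
  refine ⟨g, ?_, ?_, ?_⟩
  · apply (β ^ 2).isUnit.mul_right_cancel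
    rw [Units.val_pow_eq_pow_val, one_mul, ← mul_pow, hgβ, h3, hβ, mul_pow, h1, ← map_pow,
      ← map_mul, ha]
  · apply (β.isUnit.map σA).mul_right_cancel
    rw [← map_mul, hgβ, h4, hσβ, ← hgβ]
    ring
  · rw [← hgβ, hβ]; ring

/-- Two 1-cocycles `α⁻¹ ⊗ α` and `α'⁻¹ ⊗ α'` for the σ-algebraic subgroup
`G ≤ 𝔾ₘ` with `G(R) = {g ∈ Rˣ | g² = 1, σ(g) = g}` are cohomologous iff the
corresponding pairs `(a, b)` and `(a', b')` are equivalent. -/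
theorem cocycles_mu2_equivalent_iff (k A : Type*) [Field k] [CommRing A] [Algebra k A]
    [Nontrivial A]
    (σk : k →+* k) (σA : A →+* A)
    (hσ : ∀ c : k, σA (algebraMap k A c) = algebraMap k A (σk c))
    (α α' : Aˣ) (a b a' b' : k)
    (h1 : ((α : Aˣ) : A) ^ 2 = algebraMap k A a)
    (h2 : σA ((α : Aˣ) : A) = algebraMap k A b * ((α : Aˣ) : A))
    (h3 : ((α' : Aˣ) : A) ^ 2 = algebraMap k A a')
    (h4 : σA ((α' : Aˣ) : A) = algebraMap k A b' * ((α' : Aˣ) : A)) :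
    (∃ g : Aˣ,
      ((g : Aˣ) : A) ^ 2 = 1 ∧
      σA ((g : Aˣ) : A) = ((g : Aˣ) : A) ∧
      ((α'⁻¹ : Aˣ) : A) ⊗ₜ[k] ((α' : Aˣ) : A) =
        ((1 : A) ⊗ₜ[k] ((g : Aˣ) : A)) *
          (((α⁻¹ : Aˣ) : A) ⊗ₜ[k] ((α : Aˣ) : A)) *
          (((g⁻¹ : Aˣ) : A) ⊗ₜ[k] (1 : A))) ↔
    (∃ l : k, l ≠ 0 ∧ a' = l ^ 2 * a ∧ l * b' = σk l * b) := by
  simp_rw [one_tmul_mul_inv_tmul_mul_inv_tmul_one, inv_tmul_self_eq_inv_tmul_self_iff,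
    Units.val_mul]
  constructor
  · rintro ⟨g, hg2, hgσ, l, hl⟩
    exact ⟨l, eq_sq_mul_and_mul_eq_of_eq_algebraMap_mul hσ h1 h2 h3 h4 hg2 hgσ hl⟩
  · rintro ⟨l, hl, ha, hb⟩
    obtain ⟨g, hg2, hgσ, hg⟩ := exists_eq_algebraMap_mul_of_eq_sq_mul hσ h1 h2 h3 h4 hl ha hb
    exact ⟨g, hg2, hgσ, l, hg⟩
end
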